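/- (Characterization of W-NE existence in multi-satisficing games.) Let G be a multi-satisficing game and let W : Ω → ℕ assign to each agent i a payoff with W(i) ≤ |T_i|. There exists a Nash equilibrium σ of G such that every agent i's payoff on ρ_σ equals W(i) if and only if there exists a play ρ = (v_0,d_0),(v_1,d_1),… from the initial state v0 such that: (1) for every agent i, the payoff of i on ρ equals W(i); and (2) for every agent i with W(i) < |T_i| and every n ∈ ℕ, agent i does not force, from the position consisting of the first n steps of ρ in which the other agents' components of the step-n decision are fixed to those of d_n (and the other agents are unconstrained from step n+1 onward), the set of plays ρ' on which agent i's payoff is strictly greater than W(i). -/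

import Mathlib

/-- A discounted-sum game: finite nonempty state set `V` with initial state `v0`,
`k` agents each with a finite nonempty action set `A i`, deterministic transition
function `tr`, integer discount factor `γ > 1`, and reward function `wt`
assigning each state-decision pair an integer reward for each agent. -/
structure DSGame where
  V : Type
  fintypeV : Fintype V
  nonemptyV : Nonempty V
  v0 : V
  k : ℕ
  A : Fin k → Type
  fintypeA : ∀ i, Fintype (A i)
  nonemptyA : ∀ i, Nonempty (A i)
  tr : V → (∀ i, A i) → V
  γ : ℤ
  hγ : 1 < γ
  wt : V → (∀ i, A i) → Fin k → ℤ

namespace DSGame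

variable (G : DSGame)

instance : Fintype G.V := G.fintypeV
instance : Nonempty G.V := G.nonemptyV
instance (i : Fin G.k) : Fintype (G.A i) := G.fintypeA i
instance (i : Fin G.k) : Nonempty (G.A i) := G.nonemptyA i

/-- The set of decisions `D = A_0 × ⋯ × A_{k-1}`. -/
abbrev D := ∀ i : Fin G.k, G.A i

instance : Nonempty G.D := ⟨fun i => Classical.arbitrary (G.A i)⟩
instance : Nonempty (G.V × G.D) := ⟨Classical.arbitrary G.V, Classical.arbitrary G.D⟩

/-- A play from state `v`: an infinite sequence of state-decision pairs starting at `v`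
and following the transition function. -/
def IsPlayFrom (v : G.V) (ρ : ℕ → G.V × G.D) : Prop :=
  (ρ 0).1 = v ∧ ∀ j : ℕ, (ρ (j + 1)).1 = G.tr (ρ j).1 (ρ j).2

/-- A play of the game (from the initial state). -/
def IsPlay (ρ : ℕ → G.V × G.D) : Prop := G.IsPlayFrom G.v0 ρ

/-- Cumulative reward of agent `i` on a play: `R_i(ρ) = Σ_j W(v_j,d_j)[i]·γ^{-j}`. -/
noncomputable def reward (i : Fin G.k) (ρ : ℕ → G.V × G.D) : ℝ :=
  ∑' j : ℕ, (G.wt (ρ j).1 (ρ j).2 i : ℝ) / (G.γ : ℝ) ^ j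

/-- A (deterministic) strategy for agent `i`: a function of the observed history. -/
def Strategy (i : Fin G.k) : Type := List (G.V × G.D) → G.V → G.A i

/-- A strategy profile: one strategy per agent. -/
abbrev Profile := ∀ i : Fin G.k, G.Strategy i

/-- History (list of state-decision pairs seen so far) and current state after `j` steps
when the profile `π` is followed. -/
def hist (π : G.Profile) : ℕ → List (G.V × G.D) × G.V
  | 0 => ([], G.v0)
  | j + 1 =>
      let p : List (G.V × G.D) × G.V := hist π j
      let d : G.D := fun i => π i p.1 p.2
      (p.1 ++ [(p.2, d)], G.tr p.2 d)

/-- The primary trace `ρ_π` of a strategy profile `π`. -/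
def play (π : G.Profile) (j : ℕ) : G.V × G.D :=
  ((G.hist π j).2, fun i => π i (G.hist π j).1 (G.hist π j).2)

/-- `⟨π_{-i}, πi⟩`: the profile `π` with agent `i`'s strategy replaced by `πi`. -/
def updProf (π : G.Profile) (i : Fin G.k) (πi : G.Strategy i) : G.Profile :=
  Function.update π i πi

/-- An informed strategy for agent `j`: a function of the history, the current state
and the other agents' current actions. -/
def InfStrategy (j : Fin G.k) : Type :=
  List (G.V × G.D) → G.V → (∀ i : Fin G.k, i ≠ j → G.A i) → G.A j

/-- A play `ρ` is consistent (from step `start` onward) with the informed strategy `s`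
of agent `j` if at every step `m ≥ start` agent `j`'s action is the one prescribed
by `s` given the history, current state, and others' current actions. -/
def Consistent (j : Fin G.k) (s : G.InfStrategy j) (ρ : ℕ → G.V × G.D) (start : ℕ) : Prop :=
  ∀ m : ℕ, start ≤ m →
    (ρ m).2 j = s (List.ofFn fun l : Fin m => ρ l) (ρ m).1 (fun i _ => (ρ m).2 i)

/-- Agent `j` forces the set of plays `P` from the position consisting of the first `n`
steps of `ρ`, where the other agents' components of the step-`n` decision are fixed to
those of `ρ n` (and the other agents are unconstrained from step `n+1` onward). -/
def ForcesFromPrefix (j : Fin G.k) (ρ : ℕ → G.V × G.D) (n : ℕ)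
    (P : (ℕ → G.V × G.D) → Prop) : Prop :=
  ∃ s : G.InfStrategy j, ∀ ρ' : ℕ → G.V × G.D, G.IsPlay ρ' →
    (∀ m : ℕ, m < n → ρ' m = ρ m) →
    (∀ i : Fin G.k, i ≠ j → (ρ' n).2 i = (ρ n).2 i) →
    G.Consistent j s ρ' n → P ρ'

end DSGame

/-- Comparison relations for satisficing goals. -/
inductive SRel | lt | le | gt | ge | eq | ne

def SRel.holds : SRel → ℝ → ℝ → Prop
  | .lt, a, b => a < b
  | .le, a, b => a ≤ b
  | .gt, a, b => a > b
  | .ge, a, b => a ≥ b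
  | .eq, a, b => a = b
  | .ne, a, b => a ≠ b

/-- Nash equilibrium of a satisficing game: no agent `i` has a deviation `πi'` such that
its satisficing goal holds on the deviant trace but fails on the primary trace. -/
def SatNE (G : DSGame) (R : Fin G.k → SRel) (t : Fin G.k → ℚ) (π : G.Profile) : Prop :=
  ∀ (i : Fin G.k) (πi' : G.Strategy i),
    ¬ ((R i).holds (G.reward i (G.play (G.updProf π i πi'))) (t i) ∧
       ¬ (R i).holds (G.reward i (G.play π)) (t i))

/-- `W`-NE of a satisficing game: a Nash equilibrium whose primary trace satisfies
exactly the goals of the agents in `W`. -/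
def SatWNE (G : DSGame) (R : Fin G.k → SRel) (t : Fin G.k → ℚ)
    (W : Set (Fin G.k)) (π : G.Profile) : Prop :=
  SatNE G R t π ∧ ∀ i : Fin G.k, (R i).holds (G.reward i (G.play π)) (t i) ↔ i ∈ W

/-- Comparison relations allowed in multi-satisficing goals. -/
inductive MRel | lt | le | gt | ge

def MRel.holds : MRel → ℝ → ℝ → Prop
  | .lt, a, b => a < b
  | .le, a, b => a ≤ b
  | .gt, a, b => a > b
  | .ge, a, b => a ≥ b

open Classical in
/-- Payoff of agent `i` with multi-satisficing goal `⟨R, T⟩` on play `ρ`: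
the number of thresholds `t ∈ T` such that `R_i(ρ) R t` holds. -/
noncomputable def msPayoff (G : DSGame) (R : MRel) (T : List ℚ) (i : Fin G.k)
    (ρ : ℕ → G.V × G.D) : ℕ :=
  (T.filter fun tq => decide (R.holds (G.reward i ρ) (tq : ℝ))).length

/-- Nash equilibrium of a multi-satisficing game: no agent has a unilateral deviation
yielding a strictly greater payoff. -/
def MSNash (G : DSGame) (R : Fin G.k → MRel) (T : Fin G.k → List ℚ) (σ : G.Profile) : Prop :=
  ∀ (i : Fin G.k) (σi' : G.Strategy i),
    ¬ (msPayoff G (R i) (T i) i (G.play σ) <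
       msPayoff G (R i) (T i) i (G.play (G.updProf σ i σi')))

/-!
If some agent could force a payoff above `W i` from a prefix of the trace of an equilibrium `σ`,
then, since the other agents' actions under `σ` are a function of the history, his informed
strategy would become an ordinary profitable deviation.

Conversely, let the agents follow `ρ` and, as soon as some agent `i` deviates alone, let the
others switch to a joint strategy keeping the payoff of `i` at most `W i`. Such a strategy exists:
the discounted reward is continuous for the product topology of discrete spaces on plays, so the
set of plays where the payoff of `i` exceeds `W i` is open (strict relations) or closed
(non-strict ones), and games with open or closed objectives are determined. Hence if `i` cannot
force that set from the position reached by his deviation, which condition (2) guarantees, the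
others force its complement.
-/

theorem List.lt_length_filter_iff {α : Type*} {L : List α} {p : α → Bool} {n : ℕ} :
    n < (L.filter p).length ↔ ∃ S : List α, S.Sublist L ∧ S.length = n + 1 ∧ ∀ t ∈ S, p t := by
  constructor
  · intro h
    refine ⟨(L.filter p).take (n + 1), (List.take_sublist _ _).trans List.filter_sublist,
      by simp; omega, fun t ht => (List.mem_filter.mp (List.mem_of_mem_take ht)).2⟩
  · rintro ⟨S, hS, hlen, hp⟩
    have := (hS.filter p).length_le
    rw [List.filter_eq_self.mpr hp] at this
    omega

theorem MRel.isOpen_or_isClosed (R : MRel) :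
    (∀ t, IsOpen {x : ℝ | R.holds x t}) ∨ ∀ t, IsClosed {x : ℝ | R.holds x t} := by
  cases R
  · exact .inl fun _ => isOpen_Iio
  · exact .inr fun _ => isClosed_Iic
  · exact .inl fun _ => isOpen_Ioi
  · exact .inr fun _ => isClosed_Ici

open Classical in
/-- At least `n + 1` thresholds are met iff all thresholds of some `n + 1`-element sublist are,
so this set is a finite union of finite intersections of sets `{x | R.holds x t}`. -/
theorem MRel.isOpen_or_isClosed_setOf_lt_length_filter (R : MRel) (L : List ℝ) (n : ℕ) :
    IsOpen {x : ℝ | n < (L.filter fun t => decide (R.holds x t)).length} ∨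
      IsClosed {x : ℝ | n < (L.filter fun t => decide (R.holds x t)).length} := by
  have hset : {x : ℝ | n < (L.filter fun t => decide (R.holds x t)).length} =
      ⋃ S ∈ {S : List ℝ | S.Sublist L ∧ S.length = n + 1}, ⋂ t ∈ {t | t ∈ S}, {x | R.holds x t} := by
    ext x
    simp [List.lt_length_filter_iff, and_assoc]
  have hfin : {S : List ℝ | S.Sublist L ∧ S.length = n + 1}.Finite :=
    L.sublists.finite_toSet.subset fun S hS => List.mem_sublists.mpr hS.1
  rw [hset]
  rcases R.isOpen_or_isClosed with h | h
  · exact .inl (isOpen_biUnion fun S _ => S.finite_toSet.isOpen_biInter fun t _ => h t)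
  · exact .inr (hfin.isClosed_biUnion fun S _ => isClosed_biInter fun t _ => h t)

namespace DSGame

variable {G : DSGame}

abbrev pref (ρ : ℕ → G.V × G.D) (n : ℕ) : List (G.V × G.D) :=
  List.ofFn fun l : Fin n => ρ l

@[simp] theorem length_pref (ρ : ℕ → G.V × G.D) (n : ℕ) : (pref ρ n).length = n :=
  List.length_ofFn

theorem pref_succ (ρ : ℕ → G.V × G.D) (n : ℕ) : pref ρ (n + 1) = pref ρ n ++ [ρ n] :=
  List.ofFn_succ_last

theorem pref_eq_pref_iff {ρ ρ' : ℕ → G.V × G.D} {n : ℕ} :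
    pref ρ' n = pref ρ n ↔ ∀ m < n, ρ' m = ρ m := by
  rw [List.ofFn_inj, funext_iff, Fin.forall_iff]

noncomputable def toSeq (h : List (G.V × G.D)) (m : ℕ) : G.V × G.D :=
  h.getD m (Classical.arbitrary _)

theorem toSeq_pref (ρ : ℕ → G.V × G.D) {m n : ℕ} (hm : m < n) : toSeq (pref ρ n) m = ρ m := by
  simp [toSeq, hm]

variable (G) in
def stAfter (h : List (G.V × G.D)) : G.V :=
  match h.getLast? with
  | none => G.v0
  | some p => G.tr p.1 p.2

theorem IsPlay.fst_eq_stAfter {ρ : ℕ → G.V × G.D} (hρ : G.IsPlay ρ) (n : ℕ) :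
    (ρ n).1 = G.stAfter (pref ρ n) := by
  cases n with
  | zero => exact hρ.1
  | succ n => rw [hρ.2 n, pref_succ, stAfter, List.getLast?_concat]

theorem IsPlay.pref_succ {ρ : ℕ → G.V × G.D} (hρ : G.IsPlay ρ) (n : ℕ) :
    pref ρ (n + 1) = pref ρ n ++ [(G.stAfter (pref ρ n), (ρ n).2)] := by
  rw [DSGame.pref_succ, ← hρ.fst_eq_stAfter]

theorem isPlay_play (π : G.Profile) : G.IsPlay (G.play π) := ⟨rfl, fun _ => rfl⟩

theorem hist_fst (π : G.Profile) (m : ℕ) : (G.hist π m).1 = pref (G.play π) m := by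
  induction m with
  | zero => rfl
  | succ m ih => rw [DSGame.pref_succ, ← ih]; rfl

theorem hist_eq (π : G.Profile) (m : ℕ) : G.hist π m = (pref (G.play π) m, (G.play π m).1) :=
  Prod.ext (hist_fst π m) rfl

theorem play_snd_apply (π : G.Profile) (m : ℕ) (j : Fin G.k) :
    (G.play π m).2 j = π j (pref (G.play π) m) (G.play π m).1 := by
  show π j (G.hist π m).1 (G.hist π m).2 = _
  rw [hist_fst]
  rfl

theorem play_eq_of_forall {π : G.Profile} {ρ : ℕ → G.V × G.D} (hρ : G.IsPlay ρ)
    (h : ∀ m j, π j (pref ρ m) (ρ m).1 = (ρ m).2 j) : G.play π = ρ := by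
  have hhist : ∀ m, G.hist π m = (pref ρ m, (ρ m).1) := by
    intro m
    induction m with
    | zero => exact Prod.ext rfl hρ.1.symm
    | succ m ih =>
      have hd : (fun j => π j (pref ρ m) (ρ m).1) = (ρ m).2 := funext (h m)
      simp only [hist, ih, hd, DSGame.pref_succ, hρ.2 m]
  funext m
  simp only [play, hhist, h]

theorem hist_congr {π π' : G.Profile} {n : ℕ}
    (h : ∀ hs v, hs.length < n → ∀ j, π j hs v = π' j hs v) {m : ℕ} (hm : m ≤ n) :
    G.hist π m = G.hist π' m := by
  induction m with
  | zero => rfl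
  | succ m ih =>
    have e := ih (by omega)
    have hd : (fun j => π j (G.hist π' m).1 (G.hist π' m).2)
        = fun j => π' j (G.hist π' m).1 (G.hist π' m).2 :=
      funext (h _ _ (by rw [hist_eq]; simp; omega))
    simp only [hist, e]
    rw [hd]

theorem updProf_apply_of_ne (π : G.Profile) {i j : Fin G.k} (πi : G.Strategy i) (hj : j ≠ i)
    (h : List (G.V × G.D)) (v : G.V) : G.updProf π i πi j h v = π j h v := by
  simp only [updProf, Function.update_of_ne hj]

theorem updProf_apply_self (π : G.Profile) {i : Fin G.k} (πi : G.Strategy i)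
    (h : List (G.V × G.D)) (v : G.V) : G.updProf π i πi i h v = πi h v := by
  simp only [updProf, Function.update_self]

/-- Against a fixed profile the others' current actions are a function of the history, so an
informed strategy can be replaced by an ordinary one. -/
theorem exists_deviation_of_forcesFromPrefix {σ : G.Profile} {i : Fin G.k} {n : ℕ}
    {P : (ℕ → G.V × G.D) → Prop} (hF : G.ForcesFromPrefix i (G.play σ) n P) :
    ∃ σi' : G.Strategy i, P (G.play (G.updProf σ i σi')) := by
  classical
  obtain ⟨s, hs⟩ := hF
  obtain ⟨σi', hσi'⟩ : ∃ σi' : G.Strategy i, ∀ h v,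
      σi' h v = if h.length < n then σ i h v else s h v fun j _ => σ j h v := ⟨_, fun _ _ => rfl⟩
  have hagree : ∀ hs v, hs.length < n → ∀ j, G.updProf σ i σi' j hs v = σ j hs v := by
    intro hs v hl j
    by_cases hj : j = i
    · subst hj
      rw [updProf_apply_self, hσi', if_pos hl]
    · rw [updProf_apply_of_ne _ _ hj]
  have hhist : ∀ m ≤ n, pref (G.play (G.updProf σ i σi')) m = pref (G.play σ) m ∧
      (G.play (G.updProf σ i σi') m).1 = (G.play σ m).1 := fun m hm => by
    have e := hist_congr hagree hm
    rw [hist_eq, hist_eq] at e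
    simpa only [Prod.mk.injEq] using e
  refine ⟨σi', hs _ (isPlay_play _) (fun m hm => ?_) (fun j hj => ?_) (fun m hm => ?_)⟩
  · obtain ⟨hpre, hst⟩ := hhist m hm.le
    refine Prod.ext hst (funext fun j => ?_)
    rw [play_snd_apply, play_snd_apply, hpre, hst, hagree _ _ (by simpa using hm)]
  · obtain ⟨hpre, hst⟩ := hhist n le_rfl
    rw [play_snd_apply, play_snd_apply, hpre, hst, updProf_apply_of_ne _ _ hj]
  · rw [play_snd_apply, updProf_apply_self, hσi', if_neg (by simpa using hm)]
    congr 1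
    funext j hj
    rw [play_snd_apply, updProf_apply_of_ne _ _ hj]

-- With discrete states and actions, plays carry the product topology, with the cylinders
-- `PiNat.cylinder ρ n` as a basis.
instance : TopologicalSpace G.V := ⊥
instance : DiscreteTopology G.V := ⟨rfl⟩
instance (i : Fin G.k) : TopologicalSpace (G.A i) := ⊥
instance (i : Fin G.k) : DiscreteTopology (G.A i) := ⟨rfl⟩

variable (G) in
abbrev CoDecision (i : Fin G.k) : Type := ∀ j : Fin G.k, j ≠ i → G.A j

def ForcesAt (i : Fin G.k) (h : List (G.V × G.D)) (P : Set (ℕ → G.V × G.D)) : Prop :=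
  ∃ s : G.InfStrategy i, ∀ ρ, G.IsPlay ρ → pref ρ h.length = h →
    G.Consistent i s ρ h.length → ρ ∈ P

def OthersEnsureAt (i : Fin G.k) (h : List (G.V × G.D)) (Q : Set (ℕ → G.V × G.D))
    (os : List (G.V × G.D) → G.CoDecision i) : Prop :=
  ∀ ρ, G.IsPlay ρ → pref ρ h.length = h →
    (∀ m, h.length ≤ m → ∀ j (hj : j ≠ i), (ρ m).2 j = os (pref ρ m) j hj) → ρ ∈ Q

def OthersForceAt (i : Fin G.k) (h : List (G.V × G.D)) (Q : Set (ℕ → G.V × G.D)) : Prop :=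
  ∃ os, OthersEnsureAt i h Q os

theorem forcesAt_of_forall {i : Fin G.k} {h : List (G.V × G.D)} {P : Set (ℕ → G.V × G.D)}
    (hP : ∀ ρ, pref ρ h.length = h → ρ ∈ P) : ForcesAt i h P :=
  ⟨fun _ _ _ => Classical.arbitrary _, fun ρ _ hpre _ => hP ρ hpre⟩

theorem othersForceAt_of_forall {i : Fin G.k} {h : List (G.V × G.D)} {Q : Set (ℕ → G.V × G.D)}
    (hQ : ∀ ρ, pref ρ h.length = h → ρ ∈ Q) : OthersForceAt i h Q :=
  ⟨fun _ _ _ => Classical.arbitrary _, fun ρ _ hpre _ => hQ ρ hpre⟩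

theorem forcesAt_of_forall_step {i : Fin G.k} {h : List (G.V × G.D)} {P : Set (ℕ → G.V × G.D)}
    (hstep : ∀ dm : G.CoDecision i, ∃ d : G.D, (∀ j (hj : j ≠ i), d j = dm j hj) ∧
      ForcesAt i (h ++ [(G.stAfter h, d)]) P) :
    ForcesAt i h P := by
  classical
  choose d hd S hS using hstep
  refine ⟨fun h' v dm => if h'.length = h.length then d dm i
    else S (fun j _ => (toSeq h' h.length).2 j) h' v dm, fun ρ hρ hpre hcons => ?_⟩
  have hn : (ρ h.length).2 = d fun j _ => (ρ h.length).2 j := by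
    funext j
    by_cases hj : j = i
    · subst hj
      simpa using hcons h.length le_rfl
    · exact (hd (fun j _ => (ρ h.length).2 j) j hj).symm
  refine hS (fun j _ => (ρ h.length).2 j) ρ hρ ?_ fun m hm => ?_
  · rw [List.length_append, List.length_singleton, hρ.pref_succ, hpre, ← hn]
  · rw [List.length_append, List.length_singleton] at hm
    have := hcons m (by omega)
    beta_reduce at this
    rwa [length_pref, if_neg (by omega), toSeq_pref _ (by omega)] at this

theorem othersForceAt_of_exists_step {i : Fin G.k} {h : List (G.V × G.D)}
    {Q : Set (ℕ → G.V × G.D)}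
    (hstep : ∃ dm : G.CoDecision i, ∀ d : G.D, (∀ j (hj : j ≠ i), d j = dm j hj) →
      OthersForceAt i (h ++ [(G.stAfter h, d)]) Q) :
    OthersForceAt i h Q := by
  classical
  obtain ⟨dm, hdm⟩ := hstep
  refine ⟨fun h' => if h'.length = h.length then dm
    else if c : OthersForceAt i (h ++ [(G.stAfter h, (toSeq h' h.length).2)]) Q then c.choose h'
    else dm, fun ρ hρ hpre hfol => ?_⟩
  have c := hdm _ fun j hj => by simpa using hfol h.length le_rfl j hj
  refine c.choose_spec ρ hρ ?_ fun m hm j hj => ?_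
  · rw [List.length_append, List.length_singleton, hρ.pref_succ, hpre]
  · rw [List.length_append, List.length_singleton] at hm
    have := hfol m (by omega) j hj
    beta_reduce at this
    rwa [length_pref, if_neg (by omega), toSeq_pref _ (by omega), dif_pos c] at this

theorem exists_othersStrategy_invariant {i : Fin G.k} (Good : List (G.V × G.D) → Prop)
    (hstep : ∀ h, Good h → ∃ dm : G.CoDecision i, ∀ d : G.D, (∀ j (hj : j ≠ i), d j = dm j hj) →
      Good (h ++ [(G.stAfter h, d)])) :
    ∃ os : List (G.V × G.D) → G.CoDecision i, ∀ ρ, G.IsPlay ρ → ∀ n, Good (pref ρ n) →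
      (∀ m, n ≤ m → ∀ j (hj : j ≠ i), (ρ m).2 j = os (pref ρ m) j hj) →
      ∀ m, n ≤ m → Good (pref ρ m) := by
  classical
  choose dm hdm using hstep
  refine ⟨fun h => if c : Good h then dm h c else fun j _ => Classical.arbitrary _,
    fun ρ hρ n hn hfol m hm => ?_⟩
  induction m, hm using Nat.le_induction with
  | base => exact hn
  | succ m hm ih =>
    rw [hρ.pref_succ]
    refine hdm _ ih _ fun j hj => ?_
    simp only [hfol m hm j hj, dif_pos ih]

theorem exists_infStrategy_invariant {i : Fin G.k} (Good : List (G.V × G.D) → Prop)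
    (hstep : ∀ h, Good h → ∀ dm : G.CoDecision i, ∃ d : G.D, (∀ j (hj : j ≠ i), d j = dm j hj) ∧
      Good (h ++ [(G.stAfter h, d)])) :
    ∃ s : G.InfStrategy i, ∀ ρ, G.IsPlay ρ → ∀ n, Good (pref ρ n) → G.Consistent i s ρ n →
      ∀ m, n ≤ m → Good (pref ρ m) := by
  classical
  choose d hd hgood using hstep
  refine ⟨fun h _ dm => if c : Good h then d h c dm i else Classical.arbitrary _,
    fun ρ hρ n hn hcons m hm => ?_⟩
  induction m, hm using Nat.le_induction with
  | base => exact hn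
  | succ m hm ih =>
    have hdm : (ρ m).2 = d _ ih fun j _ => (ρ m).2 j := by
      funext j
      by_cases hj : j = i
      · subst hj
        simpa [dif_pos ih] using hcons m hm
      · exact (hd _ ih (fun j _ => (ρ m).2 j) j hj).symm
    rw [hρ.pref_succ, hdm]
    exact hgood _ ih _

theorem othersForceAt_compl_of_isOpen {i : Fin G.k} {h : List (G.V × G.D)}
    {P : Set (ℕ → G.V × G.D)} (hP : IsOpen P) (hnot : ¬ ForcesAt i h P) :
    OthersForceAt i h Pᶜ := by
  obtain ⟨os, hos⟩ := exists_othersStrategy_invariant (i := i) (fun h' => ¬ ForcesAt i h' P)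
    fun h' hh' => by
      by_contra! hc
      exact hh' (forcesAt_of_forall_step hc)
  refine ⟨os, fun ρ hρ hpre hfol hρP => ?_⟩
  -- `P` contains a cylinder around `ρ`, from whose base `i` forces `P` trivially.
  obtain ⟨n, hn⟩ := PiNat.exists_disjoint_cylinder hP.isClosed_compl (not_not_intro hρP)
  refine hos ρ hρ h.length (by rwa [hpre]) hfol (h.length + n) (by omega)
    (forcesAt_of_forall fun ρ' hρ' => Set.disjoint_compl_left_iff_subset.mp hn ?_)
  rw [PiNat.mem_cylinder_iff]
  intro m hm
  exact pref_eq_pref_iff.mp (by simpa using hρ') m (by omega)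

theorem othersForceAt_compl_of_isClosed {i : Fin G.k} {h : List (G.V × G.D)}
    {P : Set (ℕ → G.V × G.D)} (hP : IsClosed P) (hnot : ¬ ForcesAt i h P) :
    OthersForceAt i h Pᶜ := by
  by_contra hno
  obtain ⟨s, hs⟩ := exists_infStrategy_invariant (i := i) (fun h' => ¬ OthersForceAt i h' Pᶜ)
    fun h' hh' dm => by
      by_contra! hc
      exact hh' (othersForceAt_of_exists_step ⟨dm, hc⟩)
  refine hnot ⟨s, fun ρ hρ hpre hcons => ?_⟩
  by_contra hρP
  -- Some cylinder around `ρ` misses the closed set `P`; from its base the others force `Pᶜ`.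
  obtain ⟨n, hn⟩ := PiNat.exists_disjoint_cylinder hP hρP
  refine hs ρ hρ h.length (by rwa [hpre]) hcons (h.length + n) (by omega)
    (othersForceAt_of_forall fun ρ' hρ' hρ'P => Set.disjoint_left.mp hn hρ'P ?_)
  rw [PiNat.mem_cylinder_iff]
  intro m hm
  exact pref_eq_pref_iff.mp (by simpa using hρ') m (by omega)

theorem othersForceAt_compl {i : Fin G.k} {h : List (G.V × G.D)} {P : Set (ℕ → G.V × G.D)}
    (hP : IsOpen P ∨ IsClosed P) (hnot : ¬ ForcesAt i h P) : OthersForceAt i h Pᶜ :=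
  hP.elim (othersForceAt_compl_of_isOpen · hnot) (othersForceAt_compl_of_isClosed · hnot)

theorem continuous_reward (i : Fin G.k) : Continuous (G.reward i) := by
  obtain ⟨B, hB⟩ := (Set.finite_range fun p : G.V × G.D => |(G.wt p.1 p.2 i : ℝ)|).bddAbove
  have hγ : (1 : ℝ) < G.γ := by exact_mod_cast G.hγ
  have hq : (0 : ℝ) ≤ (G.γ : ℝ)⁻¹ := inv_nonneg.mpr (by linarith)
  refine continuous_tsum (u := fun j => B * (G.γ : ℝ)⁻¹ ^ j)
    (fun j => (continuous_of_discreteTopology (f := fun p : G.V × G.D =>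
      (G.wt p.1 p.2 i : ℝ) / (G.γ : ℝ) ^ j)).comp (continuous_apply j))
    ((summable_geometric_of_lt_one hq (inv_lt_one_of_one_lt₀ hγ)).mul_left B) fun j ρ => ?_
  rw [Real.norm_eq_abs, abs_div, abs_pow, abs_of_pos (by linarith : (0 : ℝ) < G.γ),
    div_eq_mul_inv, ← inv_pow]
  exact mul_le_mul_of_nonneg_right (hB ⟨ρ j, rfl⟩) (pow_nonneg hq j)

theorem isOpen_or_isClosed_setOf_lt_msPayoff (R : MRel) (T : List ℚ) (i : Fin G.k) (n : ℕ) :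
    IsOpen {ρ | n < msPayoff G R T i ρ} ∨ IsClosed {ρ | n < msPayoff G R T i ρ} := by
  unfold msPayoff
  exact (R.isOpen_or_isClosed_setOf_lt_length_filter _ n).imp (·.preimage (continuous_reward i))
    (·.preimage (continuous_reward i))

theorem msPayoff_le_length (R : MRel) (T : List ℚ) (i : Fin G.k) (ρ : ℕ → G.V × G.D) :
    msPayoff G R T i ρ ≤ T.length :=
  (List.length_filter_le _ _).trans (by simp)

def DeviatesAt (ρ ρ' : ℕ → G.V × G.D) (i : Fin G.k) (n : ℕ) : Prop :=
  (∀ m < n, ρ' m = ρ m) ∧ ρ' n ≠ ρ n ∧ (ρ' n).1 = (ρ n).1 ∧ ∀ j, j ≠ i → (ρ' n).2 j = (ρ n).2 j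

theorem DeviatesAt.unique {ρ ρ' : ℕ → G.V × G.D} {i i' : Fin G.k} {n n' : ℕ}
    (h : DeviatesAt ρ ρ' i n) (h' : DeviatesAt ρ ρ' i' n') : i = i' ∧ n = n' := by
  obtain ⟨hpre, hne, hst, hoth⟩ := h
  obtain ⟨hpre', hne', -, hoth'⟩ := h'
  obtain rfl : n = n' := by
    by_contra hnn
    rcases Nat.lt_or_gt_of_ne hnn with hlt | hlt
    · exact hne (hpre' n hlt)
    · exact hne' (hpre n' hlt)
  refine ⟨by_contra fun hii => hne (Prod.ext hst (funext fun j => ?_)), rfl⟩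
  by_cases hj : j = i
  · subst hj
    exact hoth' j hii
  · exact hoth j hj

theorem DeviatesAt.congr {ρ ρ₁ ρ₂ : ℕ → G.V × G.D} {i : Fin G.k} {n : ℕ}
    (h : DeviatesAt ρ ρ₁ i n) (h₁₂ : ∀ m ≤ n, ρ₂ m = ρ₁ m) : DeviatesAt ρ ρ₂ i n := by
  obtain ⟨hpre, hne, hst, hoth⟩ := h
  rw [← h₁₂ n le_rfl] at hne hst hoth
  exact ⟨fun m hm => (h₁₂ m hm.le).trans (hpre m hm), hne, hst, hoth⟩

theorem exists_deviatesAt_of_ne {π : G.Profile} {i : Fin G.k} {σi' : G.Strategy i}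
    (hne : G.play (G.updProf π i σi') ≠ G.play π) :
    ∃ n, DeviatesAt (G.play π) (G.play (G.updProf π i σi')) i n := by
  classical
  have hex : ∃ n, G.play (G.updProf π i σi') n ≠ G.play π n := by
    by_contra! h
    exact hne (funext h)
  have hpre : ∀ m < Nat.find hex, G.play (G.updProf π i σi') m = G.play π m :=
    fun m hm => not_not.mp (Nat.find_min hex hm)
  have hpref := pref_eq_pref_iff.mpr hpre
  have hst : (G.play (G.updProf π i σi') (Nat.find hex)).1 = (G.play π (Nat.find hex)).1 := by
    rw [(isPlay_play _).fst_eq_stAfter, (isPlay_play _).fst_eq_stAfter, hpref]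
  refine ⟨Nat.find hex, hpre, Nat.find_spec hex, hst, fun j hj => ?_⟩
  rw [play_snd_apply, play_snd_apply, updProf_apply_of_ne _ _ hj, hpref, hst]

theorem DeviatesAt.forcesFromPrefix_of_forcesAt {ρ ρ' : ℕ → G.V × G.D} {i : Fin G.k} {n : ℕ}
    {P : Set (ℕ → G.V × G.D)} (hdev : DeviatesAt ρ ρ' i n) (hρ : G.IsPlay ρ)
    (hF : ForcesAt i (pref ρ' (n + 1)) P) : G.ForcesFromPrefix i ρ n P := by
  classical
  obtain ⟨s, hs⟩ := hF
  refine ⟨fun h v dm => if h.length = n then (ρ' n).2 i else s h v dm,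
    fun ρ'' hρ'' hpre hoth hcons => ?_⟩
  have hn : ρ'' n = ρ' n := by
    refine Prod.ext ?_ (funext fun j => ?_)
    · rw [hρ''.fst_eq_stAfter, pref_eq_pref_iff.mpr hpre, ← hρ.fst_eq_stAfter, hdev.2.2.1]
    · by_cases hj : j = i
      · subst hj
        simpa using hcons n le_rfl
      · rw [hoth j hj, hdev.2.2.2 j hj]
  refine hs ρ'' hρ'' ?_ fun m hm => ?_
  · rw [length_pref, pref_succ, pref_succ, hn,
      pref_eq_pref_iff.mpr fun m hm => (hpre m hm).trans (hdev.1 m hm).symm]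
  · rw [length_pref] at hm
    have := hcons m (by omega)
    beta_reduce at this
    rwa [length_pref, if_neg (by omega)] at this

/-- The decision of the agents other than `i` under a strategy forcing `Q` from `pos`, when there
is one; the component of `i` is arbitrary. -/
noncomputable def punishment (i : Fin G.k) (pos : List (G.V × G.D)) (Q : Set (ℕ → G.V × G.D))
    (h : List (G.V × G.D)) : G.D := fun j =>
  if hj : j = i then Classical.arbitrary _ else Classical.epsilon (OthersEnsureAt i pos Q) h j hj

open Classical in
/-- Follow `ρ`; after the first unilateral deviation, by agent `i` at step `n`, the other agents
switch to a strategy forcing `(P i)ᶜ` from the position reached just after it. -/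
noncomputable def punishingProfile (ρ : ℕ → G.V × G.D) (P : Fin G.k → Set (ℕ → G.V × G.D)) :
    G.Profile := fun j h _ =>
  if h = pref ρ h.length then (ρ h.length).2 j
  else if hdev : ∃ p : Fin G.k × ℕ, p.2 < h.length ∧ DeviatesAt ρ (toSeq h) p.1 p.2 then
    punishment hdev.choose.1 (pref (toSeq h) (hdev.choose.2 + 1)) (P hdev.choose.1)ᶜ h j
  else Classical.arbitrary _

theorem punishingProfile_pref (ρ : ℕ → G.V × G.D) (P : Fin G.k → Set (ℕ → G.V × G.D)) (m : ℕ)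
    (j : Fin G.k) (v : G.V) : punishingProfile ρ P j (pref ρ m) v = (ρ m).2 j := by
  simp [punishingProfile]

theorem play_punishingProfile {ρ : ℕ → G.V × G.D} (hρ : G.IsPlay ρ)
    (P : Fin G.k → Set (ℕ → G.V × G.D)) : G.play (punishingProfile ρ P) = ρ :=
  play_eq_of_forall hρ fun m j => punishingProfile_pref ρ P m j _

theorem punishingProfile_of_deviatesAt {ρ ρ' : ℕ → G.V × G.D}
    {P : Fin G.k → Set (ℕ → G.V × G.D)} {i : Fin G.k} {n m : ℕ} (hdev : DeviatesAt ρ ρ' i n)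
    (hm : n < m) {j : Fin G.k} (hj : j ≠ i) (v : G.V) :
    punishingProfile ρ P j (pref ρ' m) v =
      Classical.epsilon (OthersEnsureAt i (pref ρ' (n + 1)) (P i)ᶜ) (pref ρ' m) j hj := by
  have hdev' : DeviatesAt ρ (toSeq (pref ρ' m)) i n :=
    hdev.congr fun l hl => toSeq_pref ρ' (by omega)
  have hoff : pref ρ' m ≠ pref ρ (pref ρ' m).length := by
    rw [length_pref, Ne, pref_eq_pref_iff]
    exact fun h => hdev.2.1 (h n hm)
  have hex : ∃ p : Fin G.k × ℕ, p.2 < (pref ρ' m).length ∧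
      DeviatesAt ρ (toSeq (pref ρ' m)) p.1 p.2 := ⟨(i, n), by simpa using hm, hdev'⟩
  have hpos : pref (toSeq (pref ρ' m)) (n + 1) = pref ρ' (n + 1) :=
    pref_eq_pref_iff.mpr fun l hl => toSeq_pref ρ' (by omega)
  obtain ⟨hi, hn⟩ := hex.choose_spec.2.unique hdev'
  have hchoose : hex.choose = (i, n) := Prod.ext hi hn
  simp only [punishingProfile, if_neg hoff, dif_pos hex]
  rw [hchoose, hpos]
  exact dif_neg hj

theorem mem_or_forcesFromPrefix_of_deviation {ρ : ℕ → G.V × G.D} (hρ : G.IsPlay ρ)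
    {P : Fin G.k → Set (ℕ → G.V × G.D)} (hP : ∀ i, IsOpen (P i) ∨ IsClosed (P i))
    {i : Fin G.k} {σi' : G.Strategy i}
    (hdev : G.play (G.updProf (punishingProfile ρ P) i σi') ∈ P i) :
    ρ ∈ P i ∨ ∃ n, G.ForcesFromPrefix i ρ n (P i) := by
  have hσ := play_punishingProfile hρ P
  by_cases heq : G.play (G.updProf (punishingProfile ρ P) i σi') = ρ
  · exact .inl (heq ▸ hdev)
  obtain ⟨n, hn⟩ := exists_deviatesAt_of_ne (π := punishingProfile ρ P) (by rwa [hσ])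
  rw [hσ] at hn
  refine .inr ⟨n, by_contra fun hnF => ?_⟩
  have hpun := Classical.epsilon_spec
    (othersForceAt_compl (hP i) fun hF => hnF (hn.forcesFromPrefix_of_forcesAt hρ hF))
  refine hpun _ (isPlay_play _) (by simp) (fun m hm j hj => ?_) hdev
  rw [play_snd_apply, updProf_apply_of_ne _ _ hj,
    punishingProfile_of_deviatesAt hn (by simpa using hm) hj]

end DSGame

theorem msWNE_exists_iff_general (G : DSGame) (R : Fin G.k → MRel) (T : Fin G.k → List ℚ)
    (Wp : Fin G.k → ℕ) :
    (∃ σ : G.Profile, MSNash G R T σ ∧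
        ∀ i : Fin G.k, msPayoff G (R i) (T i) i (G.play σ) = Wp i) ↔
      ∃ ρ : ℕ → G.V × G.D, G.IsPlay ρ ∧
        (∀ i : Fin G.k, msPayoff G (R i) (T i) i ρ = Wp i) ∧
        (∀ i : Fin G.k, Wp i < (T i).length → ∀ n : ℕ,
          ¬ G.ForcesFromPrefix i ρ n
              (fun ρ' => Wp i < msPayoff G (R i) (T i) i ρ')) := by
  constructor
  · rintro ⟨σ, hNE, hpay⟩
    refine ⟨G.play σ, DSGame.isPlay_play σ, hpay, fun i _ n hF => ?_⟩
    obtain ⟨σi', hσi'⟩ := DSGame.exists_deviation_of_forcesFromPrefix hF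
    exact hNE i σi' (hpay i ▸ hσi')
  · rintro ⟨ρ, hρ, hpay, hnF⟩
    let P i := {ρ' | Wp i < msPayoff G (R i) (T i) i ρ'}
    have hσ := DSGame.play_punishingProfile hρ P
    refine ⟨DSGame.punishingProfile ρ P, fun i σi' hlt => ?_, fun i => by rw [hσ]; exact hpay i⟩
    rw [hσ, hpay i] at hlt
    rcases DSGame.mem_or_forcesFromPrefix_of_deviation hρ
        (fun i => DSGame.isOpen_or_isClosed_setOf_lt_msPayoff _ _ i _) hlt with hρP | ⟨n, hn⟩
    · exact hρP.ne (hpay i).symm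
    · exact hnF i (hlt.trans_le (DSGame.msPayoff_le_length _ _ _ _)) n hn

/-- Characterization of `W`-NE existence in multi-satisficing games: for a
payoff assignment `Wp` with `Wp i ≤ |T i|`, a Nash equilibrium giving each agent `i`
payoff `Wp i` exists iff there is a play `ρ` from the initial state on which each agent's
payoff is `Wp i`, and no agent `i` with `Wp i < |T i|` forces, from any position
consisting of a finite prefix of `ρ` with the other agents' step-`n` actions fixed, the
set of plays on which his payoff exceeds `Wp i`. -/
theorem msWNE_exists_iff (G : DSGame) (R : Fin G.k → MRel) (T : Fin G.k → List ℚ)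
    (hT : ∀ i : Fin G.k, (T i).Pairwise (· ≤ ·))
    (Wp : Fin G.k → ℕ) (hW : ∀ i : Fin G.k, Wp i ≤ (T i).length) :
    (∃ σ : G.Profile, MSNash G R T σ ∧
        ∀ i : Fin G.k, msPayoff G (R i) (T i) i (G.play σ) = Wp i) ↔
      ∃ ρ : ℕ → G.V × G.D, G.IsPlay ρ ∧
        (∀ i : Fin G.k, msPayoff G (R i) (T i) i ρ = Wp i) ∧
        (∀ i : Fin G.k, Wp i < (T i).length → ∀ n : ℕ,
          ¬ G.ForcesFromPrefix i ρ n
              (fun ρ' => Wp i < msPayoff G (R i) (T i) i ρ')) :=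
  msWNE_exists_iff_general G R T Wp
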